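/- Let R be a ring with identity and a, b, c ∈ R satisfy a(ba)² = abaca = acaba = (ac)²a. Suppose d ∈ R satisfies d(ac) = (ac)d, d(ac)d = d, and ac - (ac)²d is nilpotent. Then for any f ∈ R with f(ba) = (ba)f, the element e = bd²a satisfies fe = ef. -/

import Mathlib

/-!
Write `x = ac`. The hypotheses say that `d` is the Drazin inverse of `x`: nilpotency of
`x - x²d = x(1 - xd)`, with `1 - xd` idempotent, gives `x^(k+1) d = x^k`. The identity
`abaca = x²a` lets `ab` act as `x` on the right ideal `xaR`, which contains `d²a` and `x²a`, and
`acaba = x²a` gives `d²aba = d²xa`. From these, `e = bd²a` satisfies the Drazin equations for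
`ba` (a Cline-type formula), and a Drazin inverse commutes with everything commuting with its
element: with `p = xe` one has `p (f e) = f e` and `(e f) p = e f`, while `p f e = e f p`.
-/

structure IsDrazinInverse {M : Type*} [Monoid M] (x e : M) : Prop where
  commute : Commute x e
  mul_mul_self : e * x * e = e
  exists_pow_succ_mul : ∃ k : ℕ, x ^ (k + 1) * e = x ^ k

namespace IsDrazinInverse

section Monoid

variable {M : Type*} [Monoid M] {x e : M}

theorem mul_sq (h : IsDrazinInverse x e) : x * e ^ 2 = e := by
  rw [pow_two, ← mul_assoc, h.commute.eq, h.mul_mul_self]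

theorem sq_mul (h : IsDrazinInverse x e) : e ^ 2 * x = e := by
  rw [← h.commute.pow_right 2 |>.eq, h.mul_sq]

theorem sq_eq_sq_mul_pow_four (h : IsDrazinInverse x e) : e ^ 2 = x ^ 2 * e ^ 4 := by
  conv_lhs => rw [← h.mul_sq, (h.commute.pow_right 2).mul_pow 2, ← pow_mul]

theorem pow_mul_pow_succ (h : IsDrazinInverse x e) (n : ℕ) : x ^ n * e ^ (n + 1) = e := by
  induction n with
  | zero => simp
  | succ n ih =>
    rw [pow_succ', pow_succ, mul_assoc, ← mul_assoc (x ^ n), ih, ← pow_two, h.mul_sq]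

theorem pow_succ_mul_pow (h : IsDrazinInverse x e) (n : ℕ) : e ^ (n + 1) * x ^ n = e := by
  rw [← (h.commute.pow_pow n (n + 1)).eq, h.pow_mul_pow_succ]

theorem commute_of_commute (h : IsDrazinInverse x e) {f : M} (hf : Commute f x) :
    Commute f e := by
  obtain ⟨k, hk⟩ := h.exists_pow_succ_mul
  have hxk : x ^ k * (x * e) = x ^ k := by rw [← mul_assoc, ← pow_succ, hk]
  have hkx : x * e * x ^ k = x ^ k := by
    rw [(((Commute.refl x).mul_left h.commute.symm).pow_right k).eq, hxk]
  have hfk : f * e = x ^ k * f * e ^ (k + 1) := by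
    conv_lhs => rw [← h.pow_mul_pow_succ k]
    rw [← mul_assoc, (hf.pow_right k).eq]
  have hkf : e * f = e ^ (k + 1) * f * x ^ k := by
    conv_lhs => rw [← h.pow_succ_mul_pow k]
    rw [mul_assoc, ← (hf.pow_right k).eq, mul_assoc]
  have hfe : f * e = x * e * (f * e) := by
    rw [hfk]
    conv_lhs => rw [← hkx]
    simp only [mul_assoc]
  have hef : e * f = e * f * (x * e) := by
    rw [hkf]
    conv_lhs => rw [← hxk]
    simp only [mul_assoc]
  calc f * e = x * e * (f * e) := hfe
    _ = e * (x * f) * e := by rw [h.commute.eq]; simp only [mul_assoc]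
    _ = e * f * (x * e) := by rw [← hf.eq]; simp only [mul_assoc]
    _ = e * f := hef.symm

end Monoid

theorem of_isNilpotent {R : Type*} [Ring R] {x d : R} (hxd : Commute x d) (hdxd : d * x * d = d)
    (hnil : IsNilpotent (x - x ^ 2 * d)) : IsDrazinInverse x d := by
  refine ⟨hxd, hdxd, ?_⟩
  obtain ⟨N, hN⟩ := hnil
  have hp : IsIdempotentElem (x * d) := by
    rw [IsIdempotentElem, mul_assoc, ← mul_assoc d, hdxd]
  have hfactor : x - x ^ 2 * d = x * (1 - x * d) := by noncomm_ring
  have hcomm : Commute x (1 - x * d) :=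
    (Commute.one_right x).sub_right ((Commute.refl x).mul_right hxd)
  refine ⟨N + 1, ?_⟩
  have h0 : x ^ (N + 1) * (1 - x * d) = 0 := by
    rw [← hp.one_sub.pow_succ_eq N, ← hcomm.mul_pow, ← hfactor, pow_succ, hN, zero_mul]
  rw [mul_sub, mul_one, sub_eq_zero, ← mul_assoc, ← pow_succ] at h0
  exact h0.symm

end IsDrazinInverse

section Cline

variable {R : Type*} [Monoid R] {a b c d : R}

theorem ab_pow_mul_aca_mul (hbc : a * b * a * c * a = (a * c) ^ 2 * a) (n : ℕ) (w : R) :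
    (a * b) ^ n * (a * c * a * w) = (a * c) ^ n * (a * c * a * w) := by
  have hstep : ∀ w, a * b * (a * c * a * w) = a * c * a * (c * a * w) := fun w => by
    have := congrArg (· * w) hbc
    simp only [pow_two, mul_assoc] at this ⊢
    exact this
  induction n generalizing w with
  | zero => simp
  | succ n ih =>
    rw [pow_succ, mul_assoc, hstep, ih, pow_succ]
    simp only [mul_assoc]

theorem ba_pow_succ (n : ℕ) : (b * a) ^ (n + 1) = b * ((a * b) ^ n * a) := by
  rw [pow_succ', mul_assoc, mul_pow_mul]

theorem IsDrazinInverse.ab_pow_mul_sq_mul (hbc : a * b * a * c * a = (a * c) ^ 2 * a)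
    (hd : IsDrazinInverse (a * c) d) (n : ℕ) :
    (a * b) ^ n * (d ^ 2 * a) = (a * c) ^ n * (d ^ 2 * a) := by
  have hd2a : d ^ 2 * a = a * c * a * (c * d ^ 4 * a) := by
    rw [hd.sq_eq_sq_mul_pow_four]; simp only [pow_two, mul_assoc]
  rw [hd2a]
  exact ab_pow_mul_aca_mul hbc n _

theorem IsDrazinInverse.sq_mul_aba (hcb : a * c * a * b * a = (a * c) ^ 2 * a)
    (hd : IsDrazinInverse (a * c) d) : d ^ 2 * (a * b * a) = d ^ 2 * (a * c) * a := by
  have hsq : d ^ 2 = d ^ 4 * (a * c) ^ 2 := by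
    rw [hd.sq_eq_sq_mul_pow_four, (hd.commute.pow_pow 2 4).eq]
  calc d ^ 2 * (a * b * a) = d ^ 4 * (a * c) * (a * c * a * b * a) := by
        rw [hsq]; simp only [pow_two, mul_assoc]
    _ = d ^ 2 * (a * c) * a := by
        rw [hcb, hsq]; simp only [pow_two, mul_assoc]

theorem IsDrazinInverse.cline (hbb : a * (b * a) ^ 2 = (a * c) ^ 2 * a)
    (hbc : a * b * a * c * a = (a * c) ^ 2 * a) (hcb : a * c * a * b * a = (a * c) ^ 2 * a)
    (hd : IsDrazinInverse (a * c) d) : IsDrazinInverse (b * a) (b * d ^ 2 * a) := by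
  have hab := hd.ab_pow_mul_sq_mul hbc
  refine ⟨?_, ?_, ?_⟩
  · calc b * a * (b * d ^ 2 * a) = b * ((a * c) ^ 1 * (d ^ 2 * a)) := by
          rw [← hab 1, pow_one]; simp only [mul_assoc]
      _ = b * d ^ 2 * a * (b * a) := by
          rw [pow_one, ← mul_assoc (a * c), (hd.commute.pow_right 2).eq, ← hd.sq_mul_aba hcb]
          simp only [mul_assoc]
  · calc b * d ^ 2 * a * (b * a) * (b * d ^ 2 * a)
          = b * (d ^ 2 * ((a * b) ^ 2 * (d ^ 2 * a))) := by simp only [pow_two, mul_assoc]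
      _ = b * (d ^ 2 * (a * c) * ((a * c) * d ^ 2) * a) := by
          rw [hab 2]; simp only [pow_two, mul_assoc]
      _ = b * d ^ 2 * a := by
          rw [hd.sq_mul, hd.mul_sq, ← pow_two]; simp only [mul_assoc]
  · obtain ⟨k, hk⟩ := hd.exists_pow_succ_mul
    have hpow : (a * c) ^ (k + 4) * d ^ 2 = (a * c) ^ (k + 2) := by
      rw [pow_succ, mul_assoc, hd.mul_sq, show k + 3 = 2 + (k + 1) by omega, pow_add,
        mul_assoc, hk, ← pow_add, add_comm]
    have hbb' : (a * b) ^ 2 * a = a * c * a * (c * a) := by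
      rw [mul_pow_mul, hbb]; simp only [pow_two, mul_assoc]
    refine ⟨k + 3, ?_⟩
    calc (b * a) ^ (k + 3 + 1) * (b * d ^ 2 * a)
          = b * ((a * b) ^ (k + 4) * (d ^ 2 * a)) := by
          rw [pow_succ, ba_pow_succ]; simp only [pow_succ, mul_assoc]
      _ = b * ((a * c) ^ (k + 2) * a) := by rw [hab, ← hpow]; simp only [mul_assoc]
      _ = b * ((a * b) ^ k * ((a * b) ^ 2 * a)) := by
          rw [hbb', ab_pow_mul_aca_mul hbc]; simp only [pow_add, pow_two, mul_assoc]
      _ = (b * a) ^ (k + 3) := by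
          rw [← mul_assoc _ _ a, ← pow_add]
          exact (ba_pow_succ (k + 2)).symm

end Cline

theorem stmt_13_general {R : Type*} [Ring R] (a b c d : R)
    (h1 : a * (b*a)^2 = a*b*a*c*a) (h2 : a*b*a*c*a = a*c*a*b*a)
    (h3 : a*c*a*b*a = (a*c)^2 * a)
    (hd1 : d * (a*c) = (a*c) * d) (hd2 : d * (a*c) * d = d)
    (hd3 : IsNilpotent (a*c - (a*c)^2 * d)) :
    ∀ f : R, f * (b*a) = (b*a) * f → f * (b*d^2*a) = (b*d^2*a) * f := by
  intro f hf
  have hd : IsDrazinInverse (a * c) d := .of_isNilpotent hd1.symm hd2 hd3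
  have hbc : a * b * a * c * a = (a * c) ^ 2 * a := h2.trans h3
  exact (hd.cline (h1.trans hbc) hbc h3).commute_of_commute hf

theorem stmt_13 {R : Type*} [Ring R] (a b c d : R)
    (h1 : a * (b*a)^2 = a*b*a*c*a) (h2 : a*b*a*c*a = a*c*a*b*a)
    (h3 : a*c*a*b*a = (a*c)^2 * a)
    (hd1 : d * (a*c) = (a*c) * d) (hd2 : d * (a*c) * d = d)
    (hd3 : IsNilpotent (a*c - (a*c)^2 * d))
    (hdcomm : ∀ y : R, y * (a*c) = (a*c) * y → d * y = y * d) :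
    ∀ f : R, f * (b*a) = (b*a) * f → f * (b*d^2*a) = (b*d^2*a) * f :=
  stmt_13_general a b c d h1 h2 h3 hd1 hd2 hd3
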